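/- Suppose μ = φ·λ, where φ : ℝ → [0, 1] is Borel measurable and φ = 0 outside [a, b]. Let t ∈ ℝ and ε > 0 be such that sup_{x ∈ (t−ε, t+ε)} φ(x) < 1 and inf_{x ∈ (t−ε, t+ε)} φ(x) > 0. Then for every sequence (wₙ) in ℍ with wₙ → t, one has χ_L(wₙ) → t and η_L(wₙ) → 1 as n → ∞. -/

import Mathlib

/-!
Write `w = u + iy`. Then `Re C(w) = ∫ Q_y(u - x) dμ` and `Im C(w) = -∫ P_y(u - x) dμ` with the
(conjugate) Poisson kernels `P_y(x) = y / (x² + y²)`, `Q_y(x) = x / (x² + y²)`, and since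
`|e^C - e^{C̄}| = 2 e^{Re C} |sin Im C|`, both `|χ_L(w) - w|` and `|η_L(w) - 1|` are
`O(y e^{|Re C(w)|} / |sin Im C(w)|)`.

Near `t` the density lies in `[m, s]` with `0 < m ≤ s < 1`. Comparing `μ` with Lebesgue measure on
the window `(u - ε/2, u + ε/2]` keeps `-Im C(w)` in `[mπ/2, (1 + s)π/2] ⊂ (0, π)` for small `y`,
so `|sin Im C(w)|` stays bounded below. As `Q_y` is odd with `∫₀^{ε/2} Q_y ≈ log (1/y)`, the density
bounds give `|Re C(w)| ≤ (s - m) log (1/y) + O(1)`, hence `y e^{|Re C(w)|} = O(y^{1-(s-m)}) → 0`.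
-/

open MeasureTheory Complex Filter Set

noncomputable section

/-- The support of a measure on `ℝ`. -/
def msupport (μ : Measure ℝ) : Set ℝ := {x | ∀ U ∈ nhds x, μ U ≠ 0}

/-- The Cauchy transform `C(w) = ∫ (w - x)⁻¹ dμ(x)`. -/
def cauchy (μ : Measure ℝ) (w : ℂ) : ℂ := ∫ x, (w - (x : ℂ))⁻¹ ∂μ

/-- `f′_{(χ,η)}(w) = C(w) + Log (w - χ) - Log (w - χ - η + 1)`. -/
def fprime (μ : Measure ℝ) (χ η : ℝ) (w : ℂ) : ℂ :=
  cauchy μ w + Complex.log (w - (χ : ℂ)) - Complex.log (w - (χ : ℂ) - (η : ℂ) + 1)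

/-- `χ_L(w) = w + (w - w̄)(e^{C(w̄)} - 1)/(e^{C(w)} - e^{C(w̄)})`. -/
def chiL (μ : Measure ℝ) (w : ℂ) : ℂ :=
  w + (w - (starRingEnd ℂ) w) * (Complex.exp (cauchy μ ((starRingEnd ℂ) w)) - 1) /
    (Complex.exp (cauchy μ w) - Complex.exp (cauchy μ ((starRingEnd ℂ) w)))

/-- `η_L(w) = 1 + (w - w̄)(e^{C(w)} - 1)(e^{C(w̄)} - 1)/(e^{C(w)} - e^{C(w̄)})`. -/
def etaL (μ : Measure ℝ) (w : ℂ) : ℂ :=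
  1 + (w - (starRingEnd ℂ) w) * (Complex.exp (cauchy μ w) - 1) *
      (Complex.exp (cauchy μ ((starRingEnd ℂ) w)) - 1) /
    (Complex.exp (cauchy μ w) - Complex.exp (cauchy μ ((starRingEnd ℂ) w)))

open Topology ComplexConjugate

-- `π` times the usual Poisson kernel of the upper half-plane.
def halfPlanePoissonKernel (y x : ℝ) : ℝ := y / (x ^ 2 + y ^ 2)

def halfPlaneConjPoissonKernel (y x : ℝ) : ℝ := x / (x ^ 2 + y ^ 2)

section Kernels

variable {x y δ : ℝ}

lemma inv_sub_ofReal_eq (w : ℂ) (x : ℝ) :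
    (w - x)⁻¹ = halfPlaneConjPoissonKernel w.im (w.re - x) -
      halfPlanePoissonKernel w.im (w.re - x) * I := by
  apply Complex.ext <;>
    simp only [Complex.inv_re, Complex.inv_im, Complex.sub_re, Complex.sub_im, Complex.mul_re,
      Complex.mul_im, Complex.ofReal_re, Complex.ofReal_im, Complex.I_re, Complex.I_im,
      Complex.normSq_apply, halfPlaneConjPoissonKernel, halfPlanePoissonKernel] <;> ring

lemma continuous_halfPlanePoissonKernel (hy : 0 < y) : Continuous (halfPlanePoissonKernel y) :=
  continuous_const.div (by fun_prop) fun x => by positivity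

lemma continuous_halfPlaneConjPoissonKernel (hy : 0 < y) :
    Continuous (halfPlaneConjPoissonKernel y) :=
  continuous_id.div (by fun_prop) fun x => by positivity

lemma halfPlanePoissonKernel_nonneg (hy : 0 ≤ y) (x : ℝ) : 0 ≤ halfPlanePoissonKernel y x :=
  div_nonneg hy (by positivity)

lemma halfPlanePoissonKernel_le_of_le_abs (hy : 0 ≤ y) (hδ : 0 < δ) (hx : δ ≤ |x|) :
    halfPlanePoissonKernel y x ≤ y / δ ^ 2 :=
  div_le_div_of_nonneg_left hy (by positivity)
    (by nlinarith [sq_le_sq.2 ((abs_of_pos hδ).trans_le hx)])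

lemma abs_halfPlaneConjPoissonKernel_le_of_le_abs (hδ : 0 < δ) (hx : δ ≤ |x|) :
    |halfPlaneConjPoissonKernel y x| ≤ 1 / δ := by
  have hx2 := sq_le_sq.2 ((abs_of_pos hδ).trans_le hx)
  rw [halfPlaneConjPoissonKernel, abs_div, abs_of_nonneg (by positivity : 0 ≤ x ^ 2 + y ^ 2),
    div_le_div_iff₀ (by nlinarith [sq_nonneg y]) hδ, one_mul, ← sq_abs x]
  nlinarith [abs_nonneg x, sq_nonneg y]

lemma integral_halfPlanePoissonKernel (hy : 0 < y) (a b : ℝ) :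
    ∫ x in a..b, halfPlanePoissonKernel y x = Real.arctan (b / y) - Real.arctan (a / y) := by
  refine intervalIntegral.integral_eq_sub_of_hasDerivAt (f := fun x => Real.arctan (x / y))
    (fun x _ => ?_) ((continuous_halfPlanePoissonKernel hy).intervalIntegrable _ _)
  refine ((Real.hasDerivAt_arctan (x / y)).comp x ((hasDerivAt_id x).div_const y)).congr_deriv ?_
  simp only [halfPlanePoissonKernel]
  field_simp
  ring

lemma integral_halfPlaneConjPoissonKernel (hy : 0 < y) (a b : ℝ) :
    ∫ x in a..b, halfPlaneConjPoissonKernel y x =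
      (Real.log (b ^ 2 + y ^ 2) - Real.log (a ^ 2 + y ^ 2)) / 2 := by
  rw [sub_div]
  refine intervalIntegral.integral_eq_sub_of_hasDerivAt
    (f := fun x => Real.log (x ^ 2 + y ^ 2) / 2) (fun x _ => ?_)
    ((continuous_halfPlaneConjPoissonKernel hy).intervalIntegrable _ _)
  have hpos : x ^ 2 + y ^ 2 ≠ 0 := by positivity
  refine ((((hasDerivAt_pow 2 x).add_const (y ^ 2)).log hpos).div_const 2).congr_deriv ?_
  simp only [halfPlaneConjPoissonKernel]
  field_simp
  norm_num
  ring

end Kernels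

structure HasDensityBetween (μ : Measure ℝ) (m s : ℝ) (U : Set ℝ) : Prop where
  smul_le : ENNReal.ofReal m • volume.restrict U ≤ μ.restrict U
  le_smul : μ.restrict U ≤ ENNReal.ofReal s • volume.restrict U

namespace HasDensityBetween

variable {μ : Measure ℝ} {m s : ℝ} {U V : Set ℝ} {f : ℝ → ℝ}

lemma mono (h : HasDensityBetween μ m s U) (hVU : V ⊆ U) : HasDensityBetween μ m s V := by
  have restrict_le (ν ν' : Measure ℝ) (hν : ν.restrict U ≤ ν'.restrict U) :
      ν.restrict V ≤ ν'.restrict V := by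
    rw [← Measure.restrict_restrict_of_subset hVU,
      ← Measure.restrict_restrict_of_subset (μ := ν') hVU]
    exact Measure.restrict_mono le_rfl hν
  constructor
  · simpa only [Measure.restrict_smul] using restrict_le (ENNReal.ofReal m • volume) μ
      (by simpa only [Measure.restrict_smul] using h.smul_le)
  · simpa only [Measure.restrict_smul] using restrict_le μ (ENNReal.ofReal s • volume)
      (by simpa only [Measure.restrict_smul] using h.le_smul)

lemma integrableOn (h : HasDensityBetween μ m s U) (hf : IntegrableOn f U) :
    IntegrableOn f U μ :=
  (hf.smul_measure ENNReal.ofReal_ne_top).mono_measure h.le_smul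

lemma mul_setIntegral_le (h : HasDensityBetween μ m s U) (hU : MeasurableSet U) (hm : 0 ≤ m)
    (hf0 : ∀ x ∈ U, 0 ≤ f x) (hf : IntegrableOn f U) :
    m * ∫ x in U, f x ≤ ∫ x in U, f x ∂μ := by
  calc m * ∫ x in U, f x = ∫ x, f x ∂(ENNReal.ofReal m • volume.restrict U) := by
        rw [integral_smul_measure, ENNReal.toReal_ofReal hm, smul_eq_mul]
    _ ≤ ∫ x in U, f x ∂μ :=
        integral_mono_measure h.smul_le (ae_restrict_of_forall_mem hU hf0) (h.integrableOn hf)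

lemma setIntegral_le_mul (h : HasDensityBetween μ m s U) (hU : MeasurableSet U) (hs : 0 ≤ s)
    (hf0 : ∀ x ∈ U, 0 ≤ f x) (hf : IntegrableOn f U) :
    ∫ x in U, f x ∂μ ≤ s * ∫ x in U, f x := by
  calc ∫ x in U, f x ∂μ ≤ ∫ x, f x ∂(ENNReal.ofReal s • volume.restrict U) :=
        integral_mono_measure h.le_smul
          (Measure.ae_smul_measure (ae_restrict_of_forall_mem hU hf0) _)
          (hf.smul_measure ENNReal.ofReal_ne_top)
    _ = s * ∫ x in U, f x := by
        rw [integral_smul_measure, ENNReal.toReal_ofReal hs, smul_eq_mul]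

end HasDensityBetween

lemma hasDensityBetween_withDensity {φ : ℝ → ℝ} {m s : ℝ} {U : Set ℝ}
    (hU : MeasurableSet U) (hm : ∀ x ∈ U, m ≤ φ x) (hs : ∀ x ∈ U, φ x ≤ s) :
    HasDensityBetween (volume.withDensity fun x => ENNReal.ofReal (φ x)) m s U := by
  constructor <;> rw [restrict_withDensity hU, ← withDensity_const] <;>
    refine withDensity_mono (ae_restrict_of_forall_mem hU fun x hx => ?_)
  exacts [ENNReal.ofReal_le_ofReal (hm x hx), ENNReal.ofReal_le_ofReal (hs x hx)]

section CauchyTransform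

variable {μ : Measure ℝ} [IsFiniteMeasure μ] {w : ℂ}

lemma norm_inv_sub_ofReal_le (hw : 0 < w.im) (x : ℝ) : ‖(w - x)⁻¹‖ ≤ w.im⁻¹ := by
  rw [norm_inv]
  refine inv_anti₀ hw ?_
  simpa [abs_of_pos hw] using Complex.abs_im_le_norm (w - x)

lemma integrable_inv_sub_ofReal (hw : 0 < w.im) : Integrable (fun x : ℝ => (w - x)⁻¹) μ :=
  Integrable.of_bound (by fun_prop) _ (ae_of_all _ (norm_inv_sub_ofReal_le hw))

lemma cauchy_re_eq (hw : 0 < w.im) :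
    (cauchy μ w).re = ∫ x, halfPlaneConjPoissonKernel w.im (w.re - x) ∂μ := by
  simp_rw [cauchy, ← RCLike.re_eq_complex_re, ← integral_re (integrable_inv_sub_ofReal hw),
    inv_sub_ofReal_eq, RCLike.re_eq_complex_re]
  simp

lemma cauchy_im_eq (hw : 0 < w.im) :
    (cauchy μ w).im = -∫ x, halfPlanePoissonKernel w.im (w.re - x) ∂μ := by
  simp_rw [cauchy, ← RCLike.im_eq_complex_im, ← integral_im (integrable_inv_sub_ofReal hw),
    inv_sub_ofReal_eq, RCLike.im_eq_complex_im, ← integral_neg]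
  simp

end CauchyTransform

section LocalEstimates

variable {μ : Measure ℝ} [IsFiniteMeasure μ] {u y δ : ℝ} {w : ℂ}

lemma integrable_halfPlanePoissonKernel_sub (hw : 0 < w.im) :
    Integrable (fun x => halfPlanePoissonKernel w.im (w.re - x)) μ := by
  simpa [inv_sub_ofReal_eq] using (integrable_inv_sub_ofReal (μ := μ) hw).im.neg

lemma integrable_halfPlaneConjPoissonKernel_sub (hw : 0 < w.im) :
    Integrable (fun x => halfPlaneConjPoissonKernel w.im (w.re - x)) μ := by
  simpa [inv_sub_ofReal_eq] using (integrable_inv_sub_ofReal (μ := μ) hw).re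

lemma norm_setIntegral_compl_Ioc_le {f : ℝ → ℝ} {K : ℝ} (hK : 0 ≤ K)
    (hf : ∀ x, δ ≤ |u - x| → ‖f x‖ ≤ K) :
    ‖∫ x in (Ioc (u - δ) (u + δ))ᶜ, f x ∂μ‖ ≤ K * μ.real univ := by
  refine (norm_setIntegral_le_of_norm_le_const (measure_lt_top _ _) fun x hx => hf x ?_).trans
    (mul_le_mul_of_nonneg_left (measureReal_mono (subset_univ _)) hK)
  rw [mem_compl_iff, mem_Ioc, not_and_or, not_lt, not_le] at hx
  rcases hx with hx | hx
  · exact le_abs.2 (Or.inl (by linarith))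
  · exact le_abs.2 (Or.inr (by linarith))

lemma setIntegral_halfPlanePoissonKernel_Ioc (hy : 0 < y) (hδ : 0 ≤ δ) :
    ∫ x in Ioc (u - δ) (u + δ), halfPlanePoissonKernel y (u - x) =
      2 * Real.arctan (δ / y) := by
  rw [← intervalIntegral.integral_of_le (by linarith),
    intervalIntegral.integral_comp_sub_left (halfPlanePoissonKernel y),
    integral_halfPlanePoissonKernel hy, sub_sub_cancel, sub_add_cancel_left, neg_div,
    Real.arctan_neg]
  ring

lemma setIntegral_halfPlaneConjPoissonKernel_Ioc_left (hy : 0 < y) (hδ : 0 ≤ δ) :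
    ∫ x in Ioc (u - δ) u, halfPlaneConjPoissonKernel y (u - x) =
      (Real.log (δ ^ 2 + y ^ 2) - Real.log (y ^ 2)) / 2 := by
  rw [← intervalIntegral.integral_of_le (by linarith),
    intervalIntegral.integral_comp_sub_left (halfPlaneConjPoissonKernel y),
    integral_halfPlaneConjPoissonKernel hy, sub_sub_cancel, sub_self]
  simp

lemma setIntegral_neg_halfPlaneConjPoissonKernel_Ioc_right (hy : 0 < y) (hδ : 0 ≤ δ) :
    ∫ x in Ioc u (u + δ), -halfPlaneConjPoissonKernel y (u - x) =
      (Real.log (δ ^ 2 + y ^ 2) - Real.log (y ^ 2)) / 2 := by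
  rw [integral_neg, ← intervalIntegral.integral_of_le (by linarith),
    intervalIntegral.integral_comp_sub_left (halfPlaneConjPoissonKernel y),
    integral_halfPlaneConjPoissonKernel hy, sub_self, sub_add_cancel_left, neg_sq,
    zero_pow two_ne_zero, zero_add]
  ring

end LocalEstimates

namespace HasDensityBetween

variable {μ : Measure ℝ} {m s δ : ℝ} {w : ℂ}

lemma abs_setIntegral_halfPlaneConjPoissonKernel_Ioc_le
    (h : HasDensityBetween μ m s (Ioc (w.re - δ) (w.re + δ))) (hm : 0 ≤ m) (hs : 0 ≤ s)
    (hδ : 0 ≤ δ) (hw : 0 < w.im) :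
    |∫ x in Ioc (w.re - δ) (w.re + δ), halfPlaneConjPoissonKernel w.im (w.re - x) ∂μ| ≤
      (s - m) * ((Real.log (δ ^ 2 + w.im ^ 2) - Real.log (w.im ^ 2)) / 2) := by
  set Q := fun x => halfPlaneConjPoissonKernel w.im (w.re - x)
  have hQ : Continuous Q := (continuous_halfPlaneConjPoissonKernel hw).comp (continuous_sub_left _)
  have hleft := h.mono (Ioc_subset_Ioc_right (by linarith : w.re ≤ w.re + δ))
  have hright := h.mono (Ioc_subset_Ioc_left (by linarith : w.re - δ ≤ w.re))
  have hQleft : ∀ x ∈ Ioc (w.re - δ) w.re, 0 ≤ Q x := fun x hx =>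
    div_nonneg (by linarith [hx.2]) (by positivity)
  have hQright : ∀ x ∈ Ioc w.re (w.re + δ), 0 ≤ -Q x := fun x hx =>
    neg_nonneg.2 (div_nonpos_of_nonpos_of_nonneg (by linarith [hx.1]) (by positivity))
  -- The halves of the window contribute `±∫₀^δ Q_y` times factors in `[m, s]`, as `Q` is odd
  -- about `w.re`; so they cancel up to `(s - m) ∫₀^δ Q_y`.
  have hA₁ := hleft.mul_setIntegral_le measurableSet_Ioc hm hQleft hQ.integrableOn_Ioc
  have hA₂ := hleft.setIntegral_le_mul measurableSet_Ioc hs hQleft hQ.integrableOn_Ioc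
  have hB₁ := hright.mul_setIntegral_le measurableSet_Ioc hm hQright hQ.neg.integrableOn_Ioc
  have hB₂ := hright.setIntegral_le_mul measurableSet_Ioc hs hQright hQ.neg.integrableOn_Ioc
  rw [setIntegral_halfPlaneConjPoissonKernel_Ioc_left hw hδ] at hA₁ hA₂
  rw [setIntegral_neg_halfPlaneConjPoissonKernel_Ioc_right hw hδ, integral_neg] at hB₁ hB₂
  rw [← Ioc_union_Ioc_eq_Ioc (by linarith : w.re - δ ≤ w.re) (by linarith : w.re ≤ w.re + δ),
    setIntegral_union (Ioc_disjoint_Ioc_of_le le_rfl) measurableSet_Ioc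
      (hleft.integrableOn hQ.integrableOn_Ioc) (hright.integrableOn hQ.integrableOn_Ioc)]
  exact abs_le.2 ⟨by linarith, by linarith⟩

variable [IsFiniteMeasure μ]

lemma le_integral_halfPlanePoissonKernel
    (h : HasDensityBetween μ m s (Ioc (w.re - δ) (w.re + δ))) (hm : 0 ≤ m) (hδ : 0 ≤ δ)
    (hw : 0 < w.im) :
    m * (2 * Real.arctan (δ / w.im)) ≤ ∫ x, halfPlanePoissonKernel w.im (w.re - x) ∂μ := by
  have hP0 x : 0 ≤ halfPlanePoissonKernel w.im (w.re - x) := halfPlanePoissonKernel_nonneg hw.le _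
  calc m * (2 * Real.arctan (δ / w.im))
      = m * ∫ x in Ioc (w.re - δ) (w.re + δ), halfPlanePoissonKernel w.im (w.re - x) := by
        rw [setIntegral_halfPlanePoissonKernel_Ioc hw hδ]
    _ ≤ ∫ x in Ioc (w.re - δ) (w.re + δ), halfPlanePoissonKernel w.im (w.re - x) ∂μ :=
        h.mul_setIntegral_le measurableSet_Ioc hm (fun x _ => hP0 x)
          ((continuous_halfPlanePoissonKernel hw).comp (continuous_sub_left _)).integrableOn_Ioc
    _ ≤ ∫ x, halfPlanePoissonKernel w.im (w.re - x) ∂μ :=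
        setIntegral_le_integral (integrable_halfPlanePoissonKernel_sub hw) (ae_of_all _ hP0)

lemma integral_halfPlanePoissonKernel_le
    (h : HasDensityBetween μ m s (Ioc (w.re - δ) (w.re + δ))) (hs : 0 ≤ s) (hδ : 0 < δ)
    (hw : 0 < w.im) :
    ∫ x, halfPlanePoissonKernel w.im (w.re - x) ∂μ ≤
      s * Real.pi + w.im / δ ^ 2 * μ.real univ := by
  rw [← integral_add_compl (s := Ioc (w.re - δ) (w.re + δ)) measurableSet_Ioc
    (integrable_halfPlanePoissonKernel_sub hw)]
  have hnear :
      ∫ x in Ioc (w.re - δ) (w.re + δ), halfPlanePoissonKernel w.im (w.re - x) ∂μ ≤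
        s * Real.pi := by
    refine (h.setIntegral_le_mul measurableSet_Ioc hs
      (fun x _ => halfPlanePoissonKernel_nonneg hw.le _)
      ((continuous_halfPlanePoissonKernel hw).comp
        (continuous_sub_left _)).integrableOn_Ioc).trans ?_
    rw [setIntegral_halfPlanePoissonKernel_Ioc hw hδ.le]
    nlinarith [Real.arctan_lt_pi_div_two (δ / w.im)]
  have hfar := norm_setIntegral_compl_Ioc_le (μ := μ) (u := w.re) (δ := δ)
    (K := w.im / δ ^ 2) (by positivity) fun x hx => by
    rw [Real.norm_of_nonneg (halfPlanePoissonKernel_nonneg hw.le _)]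
    exact halfPlanePoissonKernel_le_of_le_abs hw.le hδ hx
  linarith [le_of_abs_le (Real.norm_eq_abs _ ▸ hfar)]

lemma abs_integral_halfPlaneConjPoissonKernel_le
    (h : HasDensityBetween μ m s (Ioc (w.re - δ) (w.re + δ))) (hm : 0 ≤ m) (hs : 0 ≤ s)
    (hδ : 0 < δ) (hw : 0 < w.im) :
    |∫ x, halfPlaneConjPoissonKernel w.im (w.re - x) ∂μ| ≤
      (s - m) * ((Real.log (δ ^ 2 + w.im ^ 2) - Real.log (w.im ^ 2)) / 2) +
        μ.real univ / δ := by
  have hnear := h.abs_setIntegral_halfPlaneConjPoissonKernel_Ioc_le hm hs hδ.le hw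
  have hfar := norm_setIntegral_compl_Ioc_le (μ := μ) (u := w.re) (δ := δ)
    (f := fun x => halfPlaneConjPoissonKernel w.im (w.re - x)) (K := 1 / δ) (by positivity)
    fun x hx => (Real.norm_eq_abs _).trans_le (abs_halfPlaneConjPoissonKernel_le_of_le_abs hδ hx)
  rw [Real.norm_eq_abs, one_div_mul_eq_div] at hfar
  rw [← integral_add_compl measurableSet_Ioc (integrable_halfPlaneConjPoissonKernel_sub hw)]
  exact (abs_add_le _ _).trans (add_le_add hnear hfar)

end HasDensityBetween

section ExpAlgebra

lemma one_le_exp_mul_exp_abs (r : ℝ) : 1 ≤ Real.exp r * Real.exp |r| := by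
  rw [← Real.exp_add]
  exact Real.one_le_exp (by linarith [neg_abs_le r])

lemma norm_exp_sub_conj_exp (z : ℂ) :
    ‖exp z - conj (exp z)‖ = 2 * Real.exp z.re * |Real.sin z.im| := by
  rw [Complex.sub_conj, norm_mul, Complex.norm_I, mul_one, Complex.norm_real, Real.norm_eq_abs,
    Complex.exp_im, abs_mul, abs_mul, abs_two, abs_of_pos (Real.exp_pos _), mul_assoc]

lemma norm_exp_sub_one_le (z : ℂ) : ‖exp z - 1‖ ≤ Real.exp z.re + 1 :=
  (norm_sub_le _ _).trans_eq (by rw [Complex.norm_exp, norm_one])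

lemma norm_conj_exp_sub_one_le (z : ℂ) : ‖conj (exp z) - 1‖ ≤ Real.exp z.re + 1 := by
  rw [← map_one (starRingEnd ℂ), ← map_sub, Complex.norm_conj]
  exact norm_exp_sub_one_le z

-- Also true when `sin z.im = 0`: then both sides are `0`, by the convention `a / 0 = 0`.
lemma norm_conj_exp_sub_one_div_le (z : ℂ) :
    ‖(conj (exp z) - 1) / (exp z - conj (exp z))‖ ≤ Real.exp |z.re| / |Real.sin z.im| := by
  have hA := Real.exp_pos z.re
  rw [norm_div, norm_exp_sub_conj_exp, ← div_div]
  refine div_le_div_of_nonneg_right ((div_le_iff₀ (by positivity)).2 ?_) (abs_nonneg _)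
  nlinarith [norm_conj_exp_sub_one_le z, one_le_exp_mul_exp_abs z.re,
    Real.one_le_exp (abs_nonneg z.re)]

lemma norm_exp_sub_one_mul_conj_exp_sub_one_div_le (z : ℂ) :
    ‖(exp z - 1) * (conj (exp z) - 1) / (exp z - conj (exp z))‖ ≤
      2 * Real.exp |z.re| / |Real.sin z.im| := by
  have hA := Real.exp_pos z.re
  have hAB : Real.exp z.re ≤ Real.exp |z.re| := Real.exp_le_exp.2 (le_abs_self _)
  rw [norm_div, norm_mul, norm_exp_sub_conj_exp, ← div_div]
  refine div_le_div_of_nonneg_right ((div_le_iff₀ (by positivity)).2 ?_) (abs_nonneg _)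
  calc ‖exp z - 1‖ * ‖conj (exp z) - 1‖ ≤ (Real.exp z.re + 1) * (Real.exp z.re + 1) :=
        mul_le_mul (norm_exp_sub_one_le z) (norm_conj_exp_sub_one_le z) (norm_nonneg _)
          (by positivity)
    _ ≤ 2 * Real.exp |z.re| * (2 * Real.exp z.re) := by
        nlinarith [one_le_exp_mul_exp_abs z.re, mul_le_mul_of_nonneg_left hAB hA.le]

end ExpAlgebra

section ChiEta

variable (μ : Measure ℝ) (w : ℂ)

lemma cauchy_conj : cauchy μ (conj w) = conj (cauchy μ w) := by
  rw [cauchy, cauchy, ← integral_conj]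
  simp_rw [map_inv₀, map_sub, Complex.conj_ofReal]

lemma chiL_sub_self : chiL μ w - w = (w - conj w) *
    ((conj (exp (cauchy μ w)) - 1) / (exp (cauchy μ w) - conj (exp (cauchy μ w)))) := by
  rw [chiL, cauchy_conj, ← Complex.exp_conj]
  ring

lemma etaL_sub_one : etaL μ w - 1 = (w - conj w) * ((exp (cauchy μ w) - 1) *
    (conj (exp (cauchy μ w)) - 1) / (exp (cauchy μ w) - conj (exp (cauchy μ w)))) := by
  rw [etaL, cauchy_conj, ← Complex.exp_conj]
  ring

lemma norm_sub_conj_self : ‖w - conj w‖ = 2 * |w.im| := by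
  rw [Complex.sub_conj, norm_mul, Complex.norm_I, mul_one, Complex.norm_real, Real.norm_eq_abs,
    abs_mul, abs_two]

lemma norm_chiL_sub_self_le : ‖chiL μ w - w‖ ≤
    2 * |w.im| * (Real.exp |(cauchy μ w).re| / |Real.sin (cauchy μ w).im|) := by
  rw [chiL_sub_self, norm_mul, norm_sub_conj_self]
  exact mul_le_mul_of_nonneg_left (norm_conj_exp_sub_one_div_le _) (by positivity)

lemma norm_etaL_sub_one_le : ‖etaL μ w - 1‖ ≤
    2 * |w.im| * (2 * Real.exp |(cauchy μ w).re| / |Real.sin (cauchy μ w).im|) := by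
  rw [etaL_sub_one, norm_mul, norm_sub_conj_self]
  exact mul_le_mul_of_nonneg_left (norm_exp_sub_one_mul_conj_exp_sub_one_div_le _) (by positivity)

end ChiEta

lemma mul_exp_mul_half_log_sub_log {c y p : ℝ} (hc : 0 < c) (hy : 0 < y) :
    y * Real.exp (p * ((Real.log (c + y ^ 2) - Real.log (y ^ 2)) / 2)) =
      y ^ (1 - p) * (c + y ^ 2) ^ (p / 2) := by
  rw [Real.rpow_def_of_pos hy, Real.rpow_def_of_pos (by positivity), ← Real.exp_add, Real.log_pow]
  nth_rw 1 [← Real.exp_log hy]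
  rw [← Real.exp_add]
  congr 1
  push_cast
  ring

lemma tendsto_abs_im_nhds_ofReal (t : ℝ) :
    Tendsto (fun w : ℂ => |w.im|) (𝓝 (t : ℂ)) (𝓝 0) := by
  simpa using (Complex.continuous_im.abs).tendsto (t : ℂ)

lemma eventually_hasDensityBetween_Ioc {μ : Measure ℝ} {m s t ε : ℝ} (hε : 0 < ε)
    (h : HasDensityBetween μ m s (Ioo (t - ε) (t + ε))) :
    ∀ᶠ w in 𝓝 (t : ℂ), HasDensityBetween μ m s (Ioc (w.re - ε / 2) (w.re + ε / 2)) := by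
  filter_upwards [Complex.continuous_re.continuousAt.preimage_mem_nhds
    (Ioo_mem_nhds (by simp; linarith : t - ε / 2 < (t : ℂ).re)
      (by simp; linarith : (t : ℂ).re < t + ε / 2))] with w hw
  exact h.mono fun x hx => ⟨by linarith [hx.1, hw.1], by linarith [hx.2, hw.2]⟩

section BoundaryBehaviour

variable {μ : Measure ℝ} [IsFiniteMeasure μ] {m s t ε : ℝ}

lemma exists_eventually_le_abs_sin_cauchy_im (hε : 0 < ε)
    (h : HasDensityBetween μ m s (Ioo (t - ε) (t + ε))) (hm : 0 < m) (hms : m ≤ s)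
    (hs : s < 1) :
    ∃ c > 0, ∀ᶠ w in 𝓝[{w : ℂ | 0 < w.im}] (t : ℂ), c ≤ |Real.sin (cauchy μ w).im| := by
  have hπ := Real.pi_pos
  have hα : m * Real.pi / 2 ∈ Ioo 0 Real.pi := ⟨by positivity, by nlinarith⟩
  have hβ : (1 + s) * Real.pi / 2 ∈ Ioo 0 Real.pi := ⟨by nlinarith, by nlinarith⟩
  refine ⟨_, lt_min (Real.sin_pos_of_pos_of_lt_pi hα.1 hα.2)
    (Real.sin_pos_of_pos_of_lt_pi hβ.1 hβ.2), ?_⟩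
  have him := tendsto_abs_im_nhds_ofReal t
  filter_upwards [self_mem_nhdsWithin,
    nhdsWithin_le_nhds (eventually_hasDensityBetween_Ioc hε h),
    nhdsWithin_le_nhds (him.eventually_le_const (half_pos hε)),
    nhdsWithin_le_nhds (((him.div_const ((ε / 2) ^ 2)).mul_const (μ.real univ)).eventually_le_const
      (by rw [zero_div, zero_mul]; nlinarith : _ < (1 - s) * Real.pi / 2))]
    with w hw hJ hyδ hyμ
  rw [abs_of_pos hw] at hyδ hyμ
  have hP₁ := hJ.le_integral_halfPlanePoissonKernel hm.le (half_pos hε).le hw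
  have hP₂ := hJ.integral_halfPlanePoissonKernel_le (hm.le.trans hms) (half_pos hε) hw
  have harctan : Real.pi / 4 ≤ Real.arctan (ε / 2 / w.im) := by
    rw [← Real.arctan_one]
    exact Real.arctan_strictMono.monotone ((one_le_div hw).2 hyδ)
  rw [cauchy_im_eq hw, Real.sin_neg, abs_neg]
  exact (strictConcaveOn_sin_Icc.concaveOn.min_le_of_mem_Icc (Ioo_subset_Icc_self hα)
    (Ioo_subset_Icc_self hβ) ⟨by nlinarith, by nlinarith⟩).trans (le_abs_self _)

lemma tendsto_abs_im_mul_exp_abs_cauchy_re (hε : 0 < ε)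
    (h : HasDensityBetween μ m s (Ioo (t - ε) (t + ε))) (hm : 0 ≤ m) (hms : m ≤ s)
    (hsm : s - m < 1) :
    Tendsto (fun w => |w.im| * Real.exp |(cauchy μ w).re|)
      (𝓝[{w : ℂ | 0 < w.im}] (t : ℂ)) (𝓝 0) := by
  set K := μ.real univ / (ε / 2)
  set G : ℝ → ℝ :=
    fun y => Real.exp K * (y ^ (1 - (s - m)) * ((ε / 2) ^ 2 + y ^ 2) ^ ((s - m) / 2))
  have hG : ContinuousAt G 0 :=
    continuousAt_const.mul ((Real.continuousAt_rpow_const _ _ (Or.inr (by linarith))).mul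
      ((by fun_prop : ContinuousAt (fun y : ℝ => (ε / 2) ^ 2 + y ^ 2) 0).rpow_const
        (Or.inl (by positivity))))
  have hG0 : G 0 = 0 := by simp [G, Real.zero_rpow (by linarith : 1 - (s - m) ≠ 0)]
  refine squeeze_zero' (.of_forall fun w => by positivity) ?_
    (hG0 ▸ hG.tendsto.comp (tendsto_abs_im_nhds_ofReal t) |>.mono_left nhdsWithin_le_nhds)
  filter_upwards [self_mem_nhdsWithin,
    nhdsWithin_le_nhds (eventually_hasDensityBetween_Ioc hε h)] with w hw hJ
  have hre := hJ.abs_integral_halfPlaneConjPoissonKernel_le hm (hm.trans hms) (half_pos hε) hw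
  rw [← cauchy_re_eq hw] at hre
  calc |w.im| * Real.exp |(cauchy μ w).re|
      ≤ w.im * Real.exp ((s - m) * ((Real.log ((ε / 2) ^ 2 + w.im ^ 2) -
          Real.log (w.im ^ 2)) / 2) + K) := by
        rw [abs_of_pos hw]
        gcongr
    _ = G |w.im| := by
        rw [abs_of_pos hw]
        change _ = Real.exp K * (w.im ^ (1 - (s - m)) * ((ε / 2) ^ 2 + w.im ^ 2) ^ ((s - m) / 2))
        rw [← mul_exp_mul_half_log_sub_log (by positivity) hw, Real.exp_add]
        ring

theorem tendsto_chiL_etaL_nhdsWithin (hε : 0 < ε)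
    (h : HasDensityBetween μ m s (Ioo (t - ε) (t + ε))) (hm : 0 < m) (hms : m ≤ s)
    (hs : s < 1) :
    Tendsto (chiL μ) (𝓝[{w : ℂ | 0 < w.im}] (t : ℂ)) (𝓝 (t : ℂ)) ∧
      Tendsto (etaL μ) (𝓝[{w : ℂ | 0 < w.im}] (t : ℂ)) (𝓝 1) := by
  obtain ⟨c, hc, hsin⟩ := exists_eventually_le_abs_sin_cauchy_im hε h hm hms hs
  have hZ := tendsto_abs_im_mul_exp_abs_cauchy_re hε h hm.le hms (by linarith)
  have hχ : Tendsto (fun w => chiL μ w - w) (𝓝[{w : ℂ | 0 < w.im}] (t : ℂ)) (𝓝 0) := by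
    refine squeeze_zero_norm' (hsin.mono fun w hw => (norm_chiL_sub_self_le μ w).trans ?_)
      (by simpa using hZ.const_mul (2 / c))
    calc _ ≤ 2 * |w.im| * (Real.exp |(cauchy μ w).re| / c) := by gcongr
      _ = _ := by ring
  have hη : Tendsto (fun w => etaL μ w - 1) (𝓝[{w : ℂ | 0 < w.im}] (t : ℂ)) (𝓝 0) := by
    refine squeeze_zero_norm' (hsin.mono fun w hw => (norm_etaL_sub_one_le μ w).trans ?_)
      (by simpa using hZ.const_mul (4 / c))
    calc _ ≤ 2 * |w.im| * (2 * Real.exp |(cauchy μ w).re| / c) := by gcongr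
      _ = _ := by ring
  exact ⟨by simpa using hχ.add (tendsto_id.mono_left nhdsWithin_le_nhds),
    by simpa using hη.add_const 1⟩

end BoundaryBehaviour

theorem chiL_etaL_tendsto_boundary_general (μ : Measure ℝ) [IsProbabilityMeasure μ]
    (φ : ℝ → ℝ) (hφ0 : ∀ x, 0 ≤ φ x) (hφ1 : ∀ x, φ x ≤ 1)
    (hdens : μ = volume.withDensity (fun x => ENNReal.ofReal (φ x)))
    (t ε : ℝ) (hε : 0 < ε)
    (hsup : sSup (φ '' Set.Ioo (t - ε) (t + ε)) < 1)
    (hinf : 0 < sInf (φ '' Set.Ioo (t - ε) (t + ε)))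
    (w : ℕ → ℂ) (hw : ∀ n, 0 < (w n).im)
    (hlim : Filter.Tendsto w Filter.atTop (nhds (t : ℂ))) :
    Filter.Tendsto (fun n => chiL μ (w n)) Filter.atTop (nhds (t : ℂ)) ∧
    Filter.Tendsto (fun n => etaL μ (w n)) Filter.atTop (nhds 1) := by
  set U := Ioo (t - ε) (t + ε)
  have hinf_le : ∀ x ∈ U, sInf (φ '' U) ≤ φ x := fun x hx =>
    csInf_le ⟨0, by rintro _ ⟨y, -, rfl⟩; exact hφ0 y⟩ (mem_image_of_mem φ hx)
  have hle_sup : ∀ x ∈ U, φ x ≤ sSup (φ '' U) := fun x hx =>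
    le_csSup ⟨1, by rintro _ ⟨y, -, rfl⟩; exact hφ1 y⟩ (mem_image_of_mem φ hx)
  have htU : t ∈ U := ⟨by linarith, by linarith⟩
  have hU := hdens ▸ hasDensityBetween_withDensity measurableSet_Ioo hinf_le hle_sup
  obtain ⟨hχ, hη⟩ := tendsto_chiL_etaL_nhdsWithin hε hU hinf
    ((hinf_le t htU).trans (hle_sup t htU)) hsup
  have hwℍ : Tendsto w atTop (𝓝[{z : ℂ | 0 < z.im}] (t : ℂ)) :=
    tendsto_nhdsWithin_iff.2 ⟨hlim, .of_forall hw⟩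
  exact ⟨hχ.comp hwℍ, hη.comp hwℍ⟩

/-- If `μ` has density `φ` with `sup φ < 1` and `inf φ > 0` on `(t-ε, t+ε)`, then for any
sequence `wₙ ∈ ℍ` with `wₙ → t`, `χ_L(wₙ) → t` and `η_L(wₙ) → 1`. -/
theorem chiL_etaL_tendsto_boundary (μ : Measure ℝ) (a b : ℝ) [IsProbabilityMeasure μ]
    (hle : μ ≤ volume) (hsupp : msupport μ ⊆ Set.Icc a b)
    (ha : a ∈ msupport μ) (hb : b ∈ msupport μ) (hab : 1 < b - a)
    (φ : ℝ → ℝ) (hmeas : Measurable φ) (hφ0 : ∀ x, 0 ≤ φ x) (hφ1 : ∀ x, φ x ≤ 1)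
    (hout : ∀ x, x ∉ Set.Icc a b → φ x = 0)
    (hdens : μ = volume.withDensity (fun x => ENNReal.ofReal (φ x)))
    (t ε : ℝ) (hε : 0 < ε)
    (hsup : sSup (φ '' Set.Ioo (t - ε) (t + ε)) < 1)
    (hinf : 0 < sInf (φ '' Set.Ioo (t - ε) (t + ε)))
    (w : ℕ → ℂ) (hw : ∀ n, 0 < (w n).im)
    (hlim : Filter.Tendsto w Filter.atTop (nhds (t : ℂ))) :
    Filter.Tendsto (fun n => chiL μ (w n)) Filter.atTop (nhds (t : ℂ)) ∧
    Filter.Tendsto (fun n => etaL μ (w n)) Filter.atTop (nhds 1) :=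
  chiL_etaL_tendsto_boundary_general μ φ hφ0 hφ1 hdens t ε hε hsup hinf w hw hlim
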